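/- Let K be a measurable space, F a real normed vector space, f ↦ ν_f an energy-measure assignment on (F, K), and ν a minimal energy-dominant measure. Let (f_i)_{i∈ℕ} be a sequence in F whose linear span is dense in F, fix versions Z^{i,j} of the Radon–Nikodym derivatives dν_{f_i,f_j}/dν, and define p(x) := sup_{N∈ℕ} rank (Z^{i,j}(x))_{i,j≤N} ∈ ℤ₊ ∪ {+∞}. Then for every N ∈ ℕ and all g₁, …, g_N ∈ F, one has rank ((dν_{g_i,g_j}/dν)(x))_{i,j≤N} ≤ p(x) for ν-a.e. x ∈ K. -/

import Mathlib

open MeasureTheory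

/-- The mutual measure value `ν_{f,g}(B) := (ν_{f+g}(B) − ν_f(B) − ν_g(B))/2`. -/
noncomputable def mutualEM {F K : Type*} [MeasurableSpace K] [Add F]
    (em : F → Measure K) (f g : F) (B : Set K) : ℝ :=
  ((em (f + g) B).toReal - (em f B).toReal - (em g B).toReal) / 2

/-- An energy-measure assignment on `(F, K)`: each `f : F` is assigned a finite measure `ν_f`
on `K` such that (a) for every measurable `B`, `(f, g) ↦ ν_{f,g}(B)` is a (symmetric) bilinear
form on `F`, and (b) `(√(ν_f B) − √(ν_g B))² ≤ ν_{f−g}(B) ≤ 2‖f − g‖²` for all measurable `B`.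
(Symmetry of the mutual form is automatic from its definition.) -/
structure EnergyMeasureAssignment (F K : Type*) [MeasurableSpace K]
    [NormedAddCommGroup F] [NormedSpace ℝ F] where
  em : F → Measure K
  finite : ∀ f, IsFiniteMeasure (em f)
  add_left : ∀ (f₁ f₂ g : F) (B : Set K), MeasurableSet B →
    mutualEM em (f₁ + f₂) g B = mutualEM em f₁ g B + mutualEM em f₂ g B
  smul_left : ∀ (c : ℝ) (f g : F) (B : Set K), MeasurableSet B →
    mutualEM em (c • f) g B = c * mutualEM em f g B
  sqrt_diff_le : ∀ (f g : F) (B : Set K), MeasurableSet B →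
    (Real.sqrt (em f B).toReal - Real.sqrt (em g B).toReal) ^ 2 ≤ (em (f - g) B).toReal
  le_norm : ∀ (f g : F) (B : Set K), MeasurableSet B →
    (em (f - g) B).toReal ≤ 2 * ‖f - g‖ ^ 2

/-- `ν` is a minimal energy-dominant measure: it is σ-finite, dominates every energy measure,
and is absolutely continuous with respect to any other σ-finite measure that does so. -/
def IsMinimalEnergyDominant {F K : Type*} [MeasurableSpace K]
    [NormedAddCommGroup F] [NormedSpace ℝ F]
    (E : EnergyMeasureAssignment F K) (ν : Measure K) : Prop :=
  SigmaFinite ν ∧ (∀ f, E.em f ≪ ν) ∧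
    ∀ ν' : Measure K, SigmaFinite ν' → (∀ f, E.em f ≪ ν') → ν ≪ ν'

/-!
Approximate each `g i` by finite combinations `∑ k, C n i k • f k` at distance `< 2⁻ⁿ`. Their
density matrix is `C n * Z_M * (C n)ᵀ`, of rank at most `p(x)` everywhere. The mutual energy on
each measurable set is a positive semidefinite bilinear form bounded by `2‖f‖‖g‖`
(Cauchy–Schwarz), so these densities converge to `W` in `L¹` at a summable rate, hence `ν`-a.e.;
since `{A | rank A ≤ r}` is closed, the bound survives the limit.
-/

open Filter Topology Matrix

namespace Matrix

variable {m n 𝕜 : Type*} [Fintype m] [Fintype n] [NontriviallyNormedField 𝕜] [CompleteSpace 𝕜]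

theorem isOpen_setOf_le_rank (k : ℕ) : IsOpen {A : Matrix m n 𝕜 | k ≤ A.rank} := by
  classical
  let toCLM : Matrix m n 𝕜 →ₗ[𝕜] (n → 𝕜) →L[𝕜] (m → 𝕜) :=
    LinearMap.toContinuousLinearMap.toLinearMap ∘ₗ Matrix.toLin'.toLinearMap
  have hcont : Continuous toCLM := LinearMap.continuous_of_finiteDimensional _
  convert (isOpen_setOfPred_nat_le_rank k).preimage hcont using 1
  ext A
  change k ≤ Module.finrank 𝕜 (LinearMap.range A.mulVecLin) ↔
    (k : Cardinal) ≤ Module.rank 𝕜 (LinearMap.range (Matrix.toLin' A))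
  rw [Matrix.toLin'_apply', ← Module.finrank_eq_rank, Nat.cast_le]

theorem isClosed_setOf_rank_le (r : ℕ) : IsClosed {A : Matrix m n 𝕜 | A.rank ≤ r} := by
  simpa only [← isOpen_compl_iff, Set.compl_ofPred, not_le, Nat.lt_iff_add_one_le]
    using isOpen_setOf_le_rank (r + 1)

theorem rank_le_of_tendsto {ι : Type*} {l : Filter ι} [l.NeBot] {A : ι → Matrix m n 𝕜}
    {B : Matrix m n 𝕜} (hA : ∀ i j, Tendsto (fun k => A k i j) l (𝓝 (B i j))) {r : ℕ∞}
    (hr : ∀ᶠ k in l, ((A k).rank : ℕ∞) ≤ r) : (B.rank : ℕ∞) ≤ r := by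
  induction r using ENat.recTopCoe with
  | top => exact le_top
  | coe r =>
    have hlim : Tendsto A l (𝓝 B) := tendsto_pi_nhds.2 fun i => tendsto_pi_nhds.2 (hA i)
    exact_mod_cast (isClosed_setOf_rank_le r).mem_of_tendsto hlim
      (hr.mono fun k hk => by exact_mod_cast hk)

end Matrix

theorem exists_matrix_approx_of_dense_span {F : Type*} [NormedAddCommGroup F] [NormedSpace ℝ F]
    {f : ℕ → F} (hf : Dense (Submodule.span ℝ (Set.range f) : Set F)) {ι : Type*} [Fintype ι]
    (g : ι → F) {ε : ℝ} (hε : 0 < ε) :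
    ∃ (M : ℕ) (C : Matrix ι (Fin M) ℝ), ∀ i, ‖g i - ∑ k, C i k • f k‖ < ε := by
  have hfin (i : ι) : ∃ c : ℕ →₀ ℝ, ‖g i - c.sum fun k a => a • f k‖ < ε := by
    obtain ⟨y, hy, hdist⟩ := hf.exists_dist_lt (g i) hε
    obtain ⟨c, rfl⟩ := Finsupp.mem_span_range_iff_exists_finsupp.1 hy
    exact ⟨c, by rwa [← dist_eq_norm]⟩
  choose c hc using hfin
  obtain ⟨M, hM⟩ := (Finset.univ.biUnion fun i => (c i).support).exists_nat_subset_range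
  refine ⟨M, Matrix.of fun i k => c i k, fun i => ?_⟩
  have hsupp : (c i).support ⊆ Finset.range M :=
    (Finset.subset_biUnion_of_mem (fun i => (c i).support) (Finset.mem_univ i)).trans hM
  have hsum := Finsupp.sum_of_support_subset (c i) hsupp (fun k a => a • f k)
    fun k _ => zero_smul ℝ (f k)
  rw [← Fin.sum_univ_eq_sum_range] at hsum
  simpa only [of_apply, hsum] using hc i

namespace MeasureTheory

variable {X : Type*} [MeasurableSpace X] {μ : Measure X}

theorem integral_norm_le_two_mul_of_abs_setIntegral_le {u : X → ℝ} (hu : Integrable u μ) {c : ℝ}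
    (hc : ∀ B, MeasurableSet B → |∫ x in B, u x ∂μ| ≤ c) : ∫ x, ‖u x‖ ∂μ ≤ 2 * c := by
  set v := hu.aestronglyMeasurable.mk u
  have huv : u =ᵐ[μ] v := hu.aestronglyMeasurable.ae_eq_mk
  have hv : Integrable v μ := hu.congr huv
  have hP : MeasurableSet {x | 0 ≤ v x} :=
    measurableSet_le measurable_const hu.aestronglyMeasurable.stronglyMeasurable_mk.measurable
  have hset (B : Set X) : ∫ x in B, v x ∂μ = ∫ x in B, u x ∂μ :=
    integral_congr_ae (ae_restrict_of_ae huv.symm)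
  calc ∫ x, ‖u x‖ ∂μ = ∫ x, |v x| ∂μ := integral_congr_ae (huv.fun_comp norm)
    _ = ∫ x in {x | 0 ≤ v x}, v x ∂μ - ∫ x in {x | 0 ≤ v x}ᶜ, v x ∂μ := by
      rw [← integral_add_compl hP hv.abs, sub_eq_add_neg, ← integral_neg]
      congr 1
      · exact setIntegral_congr_fun hP fun x hx => abs_of_nonneg hx
      · exact setIntegral_congr_fun hP.compl fun x hx => abs_of_neg (not_le.1 hx)
    _ ≤ 2 * c := by
      rw [hset, hset]
      linarith [abs_le.1 (hc _ hP), abs_le.1 (hc _ hP.compl)]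

theorem ae_tendsto_zero_of_summable_integral_norm {E : Type*} [NormedAddCommGroup E]
    {u : ℕ → X → E} (hu : ∀ n, Integrable (u n) μ)
    (hsum : Summable fun n => ∫ x, ‖u n x‖ ∂μ) :
    ∀ᵐ x ∂μ, Tendsto (fun n => u n x) atTop (𝓝 0) := by
  have hfin : ∑' n, eLpNorm (u n) 1 μ ≠ ⊤ := by
    simp_rw [eLpNorm_one_eq_lintegral_enorm, ← ofReal_integral_norm_eq_lintegral_enorm (hu _),
      ← ENNReal.ofReal_tsum_of_nonneg (fun n => integral_nonneg fun x => norm_nonneg _) hsum]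
    exact ENNReal.ofReal_ne_top
  filter_upwards [summable_norm_of_tsum_eLpNorm_ne_top le_rfl
    (fun n => (hu n).aestronglyMeasurable) hfin] with x hx
  exact tendsto_zero_iff_norm_tendsto_zero.2 hx.tendsto_atTop_zero

end MeasureTheory

namespace EnergyMeasureAssignment

variable {F K : Type*} [MeasurableSpace K] [NormedAddCommGroup F] [NormedSpace ℝ F]
  (E : EnergyMeasureAssignment F K) {B : Set K}

theorem mutualEM_comm (f g : F) : mutualEM E.em f g B = mutualEM E.em g f B := by
  rw [mutualEM, mutualEM, add_comm f g, sub_right_comm]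

noncomputable def mutualForm (hB : MeasurableSet B) : LinearMap.BilinForm ℝ F :=
  LinearMap.mk₂ ℝ (fun f g => mutualEM E.em f g B)
    (fun f₁ f₂ g => E.add_left f₁ f₂ g B hB) (fun c f g => E.smul_left c f g B hB)
    (fun f g₁ g₂ => by
      rw [E.mutualEM_comm, E.add_left _ _ _ _ hB, E.mutualEM_comm, E.mutualEM_comm g₂])
    (fun c f g => by rw [E.mutualEM_comm, E.smul_left _ _ _ _ hB, E.mutualEM_comm, smul_eq_mul])

section

variable (hB : MeasurableSet B)
include hB

@[simp]
theorem mutualForm_apply (f g : F) : E.mutualForm hB f g = mutualEM E.em f g B := rfl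

theorem mutualEM_self (f : F) :
    mutualEM E.em f f B = ((E.em f B).toReal + (E.em (-f) B).toReal) / 2 := by
  have h0 : (E.em 0 B).toReal = 0 := by
    have := E.smul_left 0 0 0 B hB
    simp only [zero_smul, zero_mul, mutualEM, add_zero] at this
    linarith
  -- polarization at `(f, -f)`
  have hneg : mutualEM E.em f (-f) B = -mutualEM E.em f f B := by
    simpa using map_neg (E.mutualForm hB f) f
  rw [mutualEM, add_neg_cancel, h0] at hneg
  linarith

theorem mutualEM_self_nonneg (f : F) : 0 ≤ mutualEM E.em f f B := by
  rw [E.mutualEM_self hB]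
  positivity

theorem mutualEM_self_le (f : F) : mutualEM E.em f f B ≤ 2 * ‖f‖ ^ 2 := by
  have hle (h : F) : (E.em h B).toReal ≤ 2 * ‖h‖ ^ 2 := by
    simpa using E.le_norm h 0 B hB
  have hf := hle f
  have hnf := hle (-f)
  rw [norm_neg] at hnf
  rw [E.mutualEM_self hB]
  linarith

theorem abs_mutualEM_le (f g : F) : |mutualEM E.em f g B| ≤ 2 * ‖f‖ * ‖g‖ := by
  refine abs_le_of_sq_le_sq ?_ (by positivity)
  have hcs := (E.mutualForm hB).apply_sq_le_of_symm
    (fun h => E.mutualEM_self_nonneg hB h) (LinearMap.BilinForm.isSymm_iff.1 ⟨E.mutualEM_comm⟩) f g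
  simp only [mutualForm_apply] at hcs
  calc mutualEM E.em f g B ^ 2 ≤ mutualEM E.em f f B * mutualEM E.em g g B := hcs
    _ ≤ (2 * ‖f‖ ^ 2) * (2 * ‖g‖ ^ 2) :=
      mul_le_mul (E.mutualEM_self_le hB f) (E.mutualEM_self_le hB g)
        (E.mutualEM_self_nonneg hB g) (by positivity)
    _ = (2 * ‖f‖ * ‖g‖) ^ 2 := by ring

theorem abs_mutualEM_sub_mutualEM_le (f g f' g' : F) :
    |mutualEM E.em f g B - mutualEM E.em f' g' B| ≤ 2 * ‖f - f'‖ * ‖g‖ + 2 * ‖f'‖ * ‖g - g'‖ := by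
  have hsplit : mutualEM E.em f g B - mutualEM E.em f' g' B
      = mutualEM E.em (f - f') g B + mutualEM E.em f' (g - g') B := by
    simp only [← mutualForm_apply E hB, map_sub, LinearMap.sub_apply]
    ring
  rw [hsplit]
  exact (abs_add_le _ _).trans
    (add_le_add (E.abs_mutualEM_le hB _ _) (E.abs_mutualEM_le hB _ _))

end

variable (ν : Measure K)

/-- `W i j` is a version of the Radon–Nikodym derivative `dν_{v i, v j}/dν`. -/
def IsMutualDensity {ι : Type*} (v : ι → F) (W : ι → ι → K → ℝ) : Prop :=
  ∀ i j, Integrable (W i j) ν ∧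
    ∀ B, MeasurableSet B → mutualEM E.em (v i) (v j) B = ∫ x in B, W i j x ∂ν

variable {E ν}

theorem IsMutualDensity.linearCombination {κ ι : Type*} [Fintype κ] {v : κ → F}
    {W : κ → κ → K → ℝ} (hW : E.IsMutualDensity ν v W) (C : Matrix ι κ ℝ) :
    E.IsMutualDensity ν (fun i => ∑ k, C i k • v k)
      (fun i j x => (C * Matrix.of (fun k l => W k l x) * Cᵀ) i j) := by
  have hentry (i j : ι) (x : K) : (C * Matrix.of (fun k l => W k l x) * Cᵀ) i j
      = ∑ l, ∑ k, C i k * C j l * W k l x := by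
    simp only [mul_apply, of_apply, transpose_apply, Finset.sum_mul]
    exact Finset.sum_congr rfl fun l _ => Finset.sum_congr rfl fun k _ => by ring
  intro i j
  simp only [hentry]
  refine ⟨integrable_finsetSum _ fun l _ => integrable_finsetSum _ fun k _ =>
    ((hW k l).1.const_mul _), fun B hB => ?_⟩
  rw [integral_finsetSum _ fun l _ => integrable_finsetSum _ fun k _ =>
    ((hW k l).1.restrict.const_mul _)]
  simp only [← mutualForm_apply E hB, map_sum, map_smul, LinearMap.sum_apply,
    LinearMap.smul_apply, smul_eq_mul, Finset.mul_sum]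
  refine Finset.sum_congr rfl fun l _ => ?_
  rw [integral_finsetSum _ fun k _ => ((hW k l).1.restrict.const_mul _)]
  refine Finset.sum_congr rfl fun k _ => ?_
  rw [integral_const_mul, mutualForm_apply, (hW k l).2 B hB]
  ring

theorem IsMutualDensity.ae_tendsto {ι : Type*} [Countable ι] {v : ι → F}
    {W : ι → ι → K → ℝ} (hW : E.IsMutualDensity ν v W) {vn : ℕ → ι → F}
    {Wn : ℕ → ι → ι → K → ℝ} (hWn : ∀ n, E.IsMutualDensity ν (vn n) (Wn n))
    (hsum : ∀ i, Summable fun n => ‖v i - vn n i‖) :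
    ∀ᵐ x ∂ν, ∀ i j, Tendsto (fun n => Wn n i j x) atTop (𝓝 (W i j x)) := by
  refine ae_all_iff.2 fun i => ae_all_iff.2 fun j => ?_
  set S := ∑' n, ‖v i - vn n i‖
  have hint (n : ℕ) : Integrable (fun x => W i j x - Wn n i j x) ν := (hW i j).1.sub (hWn n i j).1
  have hbound (n : ℕ) : ∫ x, ‖W i j x - Wn n i j x‖ ∂ν
      ≤ 2 * (2 * ‖v i - vn n i‖ * ‖v j‖ + 2 * (‖v i‖ + S) * ‖v j - vn n j‖) := by
    refine integral_norm_le_two_mul_of_abs_setIntegral_le (hint n) fun B hB => ?_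
    rw [integral_sub (hW i j).1.restrict (hWn n i j).1.restrict, ← (hW i j).2 B hB,
      ← (hWn n i j).2 B hB]
    have hvn : ‖vn n i‖ ≤ ‖v i‖ + S := (norm_le_insert (v i) (vn n i)).trans
      (add_le_add_right ((hsum i).le_tsum n fun _ _ => norm_nonneg _) _)
    refine (E.abs_mutualEM_sub_mutualEM_le hB _ _ _ _).trans ?_
    gcongr
  have hsummable : Summable fun n => ∫ x, ‖W i j x - Wn n i j x‖ ∂ν :=
    .of_nonneg_of_le (fun n => integral_nonneg fun x => norm_nonneg _) hbound
      (((((hsum i).mul_left 2).mul_right ‖v j‖).add ((hsum j).mul_left _)).mul_left 2)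
  filter_upwards [ae_tendsto_zero_of_summable_integral_norm hint hsummable] with x hx
  simpa using (tendsto_const_nhds (x := W i j x)).sub hx

end EnergyMeasureAssignment

theorem stmt11_general {F K : Type*} [MeasurableSpace K] [NormedAddCommGroup F] [NormedSpace ℝ F]
    (E : EnergyMeasureAssignment F K) (ν : Measure K)
    (f : ℕ → F) (hdense : Dense (Submodule.span ℝ (Set.range f) : Set F))
    (Z : ℕ → ℕ → K → ℝ)
    (hZint : ∀ i j, Integrable (Z i j) ν)
    (hZ : ∀ (i j : ℕ) (B : Set K), MeasurableSet B →
      mutualEM E.em (f i) (f j) B = ∫ x in B, Z i j x ∂ν)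
    (N : ℕ) (g : Fin N → F) (W : Fin N → Fin N → K → ℝ)
    (hWint : ∀ i j, Integrable (W i j) ν)
    (hW : ∀ (i j : Fin N) (B : Set K), MeasurableSet B →
      mutualEM E.em (g i) (g j) B = ∫ x in B, W i j x ∂ν) :
    ∀ᵐ x ∂ν, ((Matrix.of fun i j : Fin N => W i j x).rank : ℕ∞)
      ≤ ⨆ M : ℕ, ((Matrix.of fun i j : Fin M => Z i j x).rank : ℕ∞) := by
  choose M C hC using fun n : ℕ =>
    exists_matrix_approx_of_dense_span hdense g (pow_pos (half_pos one_pos) n)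
  have hZM (m : ℕ) : E.IsMutualDensity ν (fun k : Fin m => f k) (fun k l => Z k l) :=
    fun k l => ⟨hZint k l, hZ k l⟩
  have hconv := EnergyMeasureAssignment.IsMutualDensity.ae_tendsto (fun i j => ⟨hWint i j, hW i j⟩)
    (fun n => (hZM (M n)).linearCombination (C n))
    (fun i => .of_nonneg_of_le (fun n => norm_nonneg _) (fun n => (hC n i).le)
      summable_geometric_two)
  filter_upwards [hconv] with x hx
  refine Matrix.rank_le_of_tendsto hx (Eventually.of_forall fun n => ?_)
  calc ((C n * Matrix.of (fun k l : Fin (M n) => Z k l x) * (C n)ᵀ).rank : ℕ∞)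
      ≤ (Matrix.of fun k l : Fin (M n) => Z k l x).rank :=
        Nat.cast_le.2 ((Matrix.rank_mul_le_left _ _).trans (Matrix.rank_mul_le_right _ _))
    _ ≤ ⨆ M : ℕ, ((Matrix.of fun i j : Fin M => Z i j x).rank : ℕ∞) := le_iSup_of_le (M n) le_rfl

/-- Proposition 2.7 of the paper: with `(f i)` a sequence whose span is dense in `F` and
`Z i j` fixed versions of the densities `dν_{f_i,f_j}/dν`, the function
`p(x) = sup_N rank (Z^{i,j}(x))_{i,j<N}` dominates, ν-a.e., the rank of the density matrix of
any finite family `g₁, …, g_N ∈ F` (for any versions `W` of its densities). -/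
theorem stmt11 {F K : Type*} [MeasurableSpace K] [NormedAddCommGroup F] [NormedSpace ℝ F]
    (E : EnergyMeasureAssignment F K) (ν : Measure K)
    (hν : IsMinimalEnergyDominant E ν)
    (f : ℕ → F) (hdense : Dense (Submodule.span ℝ (Set.range f) : Set F))
    (Z : ℕ → ℕ → K → ℝ)
    (hZmeas : ∀ i j, Measurable (Z i j))
    (hZint : ∀ i j, Integrable (Z i j) ν)
    (hZ : ∀ (i j : ℕ) (B : Set K), MeasurableSet B →
      mutualEM E.em (f i) (f j) B = ∫ x in B, Z i j x ∂ν)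
    (N : ℕ) (g : Fin N → F) (W : Fin N → Fin N → K → ℝ)
    (hWmeas : ∀ i j, Measurable (W i j))
    (hWint : ∀ i j, Integrable (W i j) ν)
    (hW : ∀ (i j : Fin N) (B : Set K), MeasurableSet B →
      mutualEM E.em (g i) (g j) B = ∫ x in B, W i j x ∂ν) :
    ∀ᵐ x ∂ν, ((Matrix.of fun i j : Fin N => W i j x).rank : ℕ∞)
      ≤ ⨆ M : ℕ, ((Matrix.of fun i j : Fin M => Z i j x).rank : ℕ∞) :=
  stmt11_general E ν f hdense Z hZint hZ N g W hWint hW
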